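/- arXiv:2105.13049 — 4 statements merged into one kernel-verified Lean document; each statement's English description precedes it below -/
import Mathlib

section
/- For every n ≥ 1, (1/n!) · ∑_{σ ∈ S_n} det(I_n - x·M_σ) = 1 - x, as polynomials in ℚ[x]. -/
open Polynomial Matrix

/-- The permutations fixing a given point `i` number `(n-1)!`. -/
lemma card_perm_fixing (n : ℕ) (i : Fin n) :
    (Finset.univ.filter (fun ρ : Equiv.Perm (Fin n) => ρ i = i)).card =
      (n - 1).factorial := by
  rw [← Fintype.card_subtype]
  have e : {ρ : Equiv.Perm (Fin n) // ρ i = i} ≃ Equiv.Perm {j : Fin n // j ≠ i} := by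
    refine (Equiv.subtypeEquivRight ?_).trans
      (Equiv.Perm.subtypeEquivSubtypePerm (fun j => j ≠ i)).symm
    intro ρ
    constructor
    · intro h a ha
      rw [not_not.mp ha, h]
    · intro h
      exact h i (not_not.mpr rfl)
  rw [Fintype.card_congr e, Fintype.card_perm, Fintype.card_subtype_compl]
  simp

/-- For every `n ≥ 1`, the average of `det (I - x • M_σ)` over `σ ∈ S_n` equals `1 - x`. -/
theorem average_det_one_sub_X_smul_permMatrix (n : ℕ) (hn : 1 ≤ n) :
    ((n.factorial : ℚ)⁻¹ : ℚ) •
        ∑ σ : Equiv.Perm (Fin n),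
          Matrix.det ((1 : Matrix (Fin n) (Fin n) ℚ[X]) - (X : ℚ[X]) • σ.permMatrix ℚ[X]) =
      1 - (X : ℚ[X]) := by
  classical
  set N : Equiv.Perm (Fin n) → Matrix (Fin n) (Fin n) ℚ[X] :=
    fun ρ => Matrix.of fun j i =>
      (if j = i then (1 : ℚ[X]) else 0) - X * (if ρ i = i then 1 else 0) with hN
  have key : ∑ σ : Equiv.Perm (Fin n),
      Matrix.det ((1 : Matrix (Fin n) (Fin n) ℚ[X]) - (X : ℚ[X]) • σ.permMatrix ℚ[X]) =
      ∑ ρ : Equiv.Perm (Fin n), (N ρ).det := by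
    calc ∑ σ : Equiv.Perm (Fin n),
        Matrix.det ((1 : Matrix (Fin n) (Fin n) ℚ[X]) - (X : ℚ[X]) • σ.permMatrix ℚ[X])
        = ∑ σ : Equiv.Perm (Fin n), ∑ τ : Equiv.Perm (Fin n),
            Equiv.Perm.sign τ • ∏ i, N (σ * τ) (τ i) i := by
          refine Finset.sum_congr rfl fun σ _ => ?_
          rw [Matrix.det_apply]
          refine Finset.sum_congr rfl fun τ _ => ?_
          congr 1
          refine Finset.prod_congr rfl fun i _ => ?_
          simp [hN, Matrix.sub_apply, Matrix.smul_apply, Matrix.one_apply,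
            PEquiv.toMatrix_apply, Equiv.toPEquiv_apply, Equiv.Perm.mul_apply,
            smul_eq_mul]
          congr
      _ = ∑ τ : Equiv.Perm (Fin n), ∑ σ : Equiv.Perm (Fin n),
            Equiv.Perm.sign τ • ∏ i, N (σ * τ) (τ i) i := Finset.sum_comm
      _ = ∑ τ : Equiv.Perm (Fin n), ∑ ρ : Equiv.Perm (Fin n),
            Equiv.Perm.sign τ • ∏ i, N ρ (τ i) i := by
          refine Finset.sum_congr rfl fun τ _ => ?_
          exact Fintype.sum_equiv (Equiv.mulRight τ) _ _ (fun σ => rfl)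
      _ = ∑ ρ : Equiv.Perm (Fin n), ∑ τ : Equiv.Perm (Fin n),
            Equiv.Perm.sign τ • ∏ i, N ρ (τ i) i := Finset.sum_comm
      _ = ∑ ρ : Equiv.Perm (Fin n), (N ρ).det := by
          refine Finset.sum_congr rfl fun ρ _ => ?_
          rw [Matrix.det_apply]
  have detN : ∀ ρ : Equiv.Perm (Fin n),
      (N ρ).det = 1 - (∑ i, if ρ i = i then (1 : ℚ[X]) else 0) * X := by
    intro ρ
    have hmat : N ρ = 1 + (Matrix.replicateCol Unit (fun _ => (1 : ℚ[X])) : Matrix (Fin n) Unit ℚ[X]) *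
        (Matrix.replicateRow Unit (fun i => -(X * (if ρ i = i then 1 else 0))) : Matrix Unit (Fin n) ℚ[X]) := by
      ext j i
      simp [hN, Matrix.mul_apply, Matrix.one_apply, sub_eq_add_neg]
    rw [hmat, Matrix.det_one_add_replicateCol_mul_replicateRow]
    simp only [dotProduct, neg_mul, one_mul, mul_one, Finset.sum_neg_distrib,
      ← sub_eq_add_neg, Finset.sum_mul]
    congr 1
    exact Finset.sum_congr rfl fun i _ => mul_comm _ _
  rw [key]
  have hsum : ∑ ρ : Equiv.Perm (Fin n), (N ρ).det =
      (n.factorial : ℚ[X]) - (n.factorial : ℚ[X]) * X := by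
    rw [Finset.sum_congr rfl fun ρ _ => detN ρ]
    rw [Finset.sum_sub_distrib, ← Finset.sum_mul]
    have h1 : ∑ _ρ : Equiv.Perm (Fin n), (1 : ℚ[X]) = (n.factorial : ℚ[X]) := by
      simp [Fintype.card_perm]
    have h2 : ∑ ρ : Equiv.Perm (Fin n), ∑ i, (if ρ i = i then (1 : ℚ[X]) else 0) =
        (n.factorial : ℚ[X]) := by
      rw [Finset.sum_comm]
      have : ∀ i : Fin n, ∑ ρ : Equiv.Perm (Fin n),
          (if ρ i = i then (1 : ℚ[X]) else 0) = ((n - 1).factorial : ℚ[X]) := by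
        intro i
        rw [Finset.sum_boole, card_perm_fixing]
      rw [Finset.sum_congr rfl fun i _ => this i]
      simp only [Finset.sum_const, Finset.card_univ, Fintype.card_fin, nsmul_eq_mul]
      rw [← Nat.cast_mul]
      congr 1
      obtain ⟨m, rfl⟩ := Nat.exists_eq_add_of_le hn
      simp [Nat.factorial_succ, Nat.add_comm 1 m]
    rw [h1, h2]
  rw [hsum]
  have hne : (n.factorial : ℚ) ≠ 0 := Nat.cast_ne_zero.mpr n.factorial_ne_zero
  rw [← mul_one_sub, Polynomial.smul_eq_C_mul, ← Polynomial.C_eq_natCast, ← mul_assoc,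
    ← Polynomial.C_mul, inv_mul_cancel₀ hne, Polynomial.C_1, one_mul]
end

section
/- For every n ≥ 1, (1/n!) · ∑_{σ ∈ S_n} det(I_n - x·M_σ)² = (1 - x)² · ∑_{k=0}^{n-1} x^{2k}, as polynomials in ℚ[x]. -/
open Polynomial Matrix

namespace AvgDet
open Equiv Finset
variable {n : ℕ}

def Stab (σ : Perm (Fin n)) (S : Finset (Fin n)) : Prop := ∀ i, i ∈ S ↔ σ i ∈ S

instance (σ : Perm (Fin n)) (S : Finset (Fin n)) : Decidable (Stab σ S) :=
  inferInstanceAs (Decidable (∀ i, i ∈ S ↔ σ i ∈ S))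

theorem Stab.inv {σ : Perm (Fin n)} {S : Finset (Fin n)} (h : Stab σ S) : Stab σ⁻¹ S := by
  intro i; have := h (σ⁻¹ i); simp at this; exact this.symm

theorem Stab.mul {σ τ : Perm (Fin n)} {S : Finset (Fin n)} (h1 : Stab σ S) (h2 : Stab τ S) :
    Stab (σ * τ) S := fun i => (h2 i).trans (h1 (τ i))

def restr (σ : Perm (Fin n)) (S : Finset (Fin n)) (h : Stab σ S) : Perm (Fin n) where
  toFun i := if i ∈ S then σ i else i
  invFun i := if i ∈ S then σ⁻¹ i else i
  left_inv i := by
    by_cases hi : i ∈ S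
    · simp [hi, (h i).mp hi]
    · simp [hi]
  right_inv i := by
    by_cases hi : i ∈ S
    · simp [hi, show σ.symm i ∈ S from (h.inv i).mp hi]
    · simp [hi]

@[simp] theorem restr_apply (σ : Perm (Fin n)) (S : Finset (Fin n)) (h : Stab σ S) (i : Fin n) :
    restr σ S h i = if i ∈ S then σ i else i := rfl

@[simp] theorem restr_inv_apply (σ : Perm (Fin n)) (S : Finset (Fin n)) (h : Stab σ S) (i : Fin n) :
    (restr σ S h)⁻¹ i = if i ∈ S then σ⁻¹ i else i := rfl

noncomputable def gp (σ : Perm (Fin n)) (S : Finset (Fin n)) : ℚ[X] :=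
  if h : Stab σ S then ((Perm.sign (restr σ S h) : ℤ) : ℚ[X]) else 0

theorem restr_mul {σ τ : Perm (Fin n)} {S : Finset (Fin n)} (h1 : Stab σ S) (h2 : Stab τ S) :
    restr (σ * τ) S (h1.mul h2) = restr σ S h1 * restr τ S h2 := by
  apply Equiv.ext; intro i
  by_cases hi : i ∈ S
  · simp [hi, (h2 i).mp hi, Perm.mul_apply]
  · simp [hi, Perm.mul_apply]

theorem gp_mul (σ τ : Perm (Fin n)) {S : Finset (Fin n)} (h2 : Stab τ S) :
    gp (σ * τ) S = gp σ S * gp τ S := by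
  by_cases h1 : Stab σ S
  · rw [gp, dif_pos (h1.mul h2), gp, dif_pos h1, gp, dif_pos h2, restr_mul h1 h2,
      _root_.map_mul]
    push_cast
    ring
  · have hno : ¬ Stab (σ * τ) S := fun hc => by
      have := hc.mul h2.inv
      rw [mul_assoc, mul_inv_cancel, mul_one] at this
      exact h1 this
    rw [gp, dif_neg hno, gp, dif_neg h1, zero_mul]

theorem gp_eq_one {σ : Perm (Fin n)} {S : Finset (Fin n)} (h : Stab σ S)
    (hid : ∀ i ∈ S, σ i = i) : gp σ S = 1 := by
  rw [gp, dif_pos h]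
  have : restr σ S h = 1 := by
    apply Equiv.ext; intro i
    by_cases hi : i ∈ S <;> simp [hi, hid]
  rw [this, _root_.map_one]
  norm_num

theorem gp_union {σ : Perm (Fin n)} {A B : Finset (Fin n)} (hd : Disjoint A B)
    (hA : Stab σ A) (hB : Stab σ B) : gp σ (A ∪ B) = gp σ A * gp σ B := by
  have hAB : Stab σ (A ∪ B) := fun i => by
    rw [Finset.mem_union, Finset.mem_union, hA i, hB i]
  have key : restr σ (A ∪ B) hAB = restr σ A hA * restr σ B hB := by
    apply Equiv.ext; intro i
    by_cases hiA : i ∈ A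
    · have hiB : i ∉ B := Finset.disjoint_left.mp hd hiA
      simp [hiA, hiB, Perm.mul_apply]
    · by_cases hiB : i ∈ B
      · have : σ i ∉ A := fun hc => Finset.disjoint_left.mp hd hc ((hB i).mp hiB)
        simp [hiA, hiB, this, Perm.mul_apply]
      · simp [hiA, hiB, Perm.mul_apply]
  rw [gp, dif_pos hAB, gp, dif_pos hA, gp, dif_pos hB, key, _root_.map_mul]
  push_cast
  ring

/-- vanishing when `S \ T` has two distinct elements -/
theorem sum_gp_eq_zero {S T : Finset (Fin n)} {i j : Fin n}
    (hi : i ∈ S \ T) (hj : j ∈ S \ T) (hij : i ≠ j) :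
    ∑ σ : Perm (Fin n), gp σ S * gp σ T = 0 := by
  set μ : Perm (Fin n) := Equiv.swap i j with hμ
  have hiS : i ∈ S := (Finset.mem_sdiff.mp hi).1
  have hjS : j ∈ S := (Finset.mem_sdiff.mp hj).1
  have hiT : i ∉ T := (Finset.mem_sdiff.mp hi).2
  have hjT : j ∉ T := (Finset.mem_sdiff.mp hj).2
  have hμS : Stab μ S := by
    intro x
    rcases eq_or_ne x i with rfl | hxi
    · simp [hμ, Equiv.swap_apply_left, hiS, hjS]
    · rcases eq_or_ne x j with rfl | hxj
      · simp [hμ, Equiv.swap_apply_right, hiS, hjS]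
      · rw [hμ, Equiv.swap_apply_of_ne_of_ne hxi hxj]
  have hμT : Stab μ T := by
    intro x
    rcases eq_or_ne x i with rfl | hxi
    · simp [hμ, Equiv.swap_apply_left, hiT, hjT]
    · rcases eq_or_ne x j with rfl | hxj
      · simp [hμ, Equiv.swap_apply_right, hiT, hjT]
      · rw [hμ, Equiv.swap_apply_of_ne_of_ne hxi hxj]
  have hgS : gp μ S = -1 := by
    rw [gp, dif_pos hμS]
    have : restr μ S hμS = μ := by
      apply Equiv.ext; intro x
      by_cases hx : x ∈ S
      · simp [hx]
      · have hxi : x ≠ i := fun h => hx (h ▸ hiS)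
        have hxj : x ≠ j := fun h => hx (h ▸ hjS)
        simp [hx, hμ, Equiv.swap_apply_of_ne_of_ne hxi hxj]
    rw [this, hμ, Equiv.Perm.sign_swap hij]
    norm_num
  have hgT : gp μ T = 1 := by
    apply gp_eq_one hμT
    intro x hx
    have hxi : x ≠ i := fun h => hiT (h ▸ hx)
    have hxj : x ≠ j := fun h => hjT (h ▸ hx)
    rw [hμ, Equiv.swap_apply_of_ne_of_ne hxi hxj]
  have key : ∀ σ : Perm (Fin n), gp (σ * μ) S * gp (σ * μ) T = -(gp σ S * gp σ T) := by
    intro σ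
    rw [gp_mul σ μ hμS, gp_mul σ μ hμT, hgS, hgT]
    ring
  have reindex : ∑ σ : Perm (Fin n), gp σ S * gp σ T =
      ∑ σ : Perm (Fin n), gp (σ * μ) S * gp (σ * μ) T := by
    exact (Fintype.sum_equiv (Equiv.mulRight μ) _ _ (fun σ => rfl)).symm
  have h2 : (2 : ℚ[X]) * ∑ σ : Perm (Fin n), gp σ S * gp σ T = 0 := by
    have := reindex
    rw [Finset.sum_congr rfl (fun σ _ => key σ), Finset.sum_neg_distrib] at this
    linear_combination this
  have := mul_eq_zero.mp h2
  rcases this with h | h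
  · exact absurd h (by norm_num)
  · exact h

theorem card_stab (S T : Finset (Fin n)) :
    (Finset.filter (fun σ : Perm (Fin n) => Stab σ S ∧ Stab σ T) Finset.univ).card =
      (S ∩ T).card.factorial * ((S \ T).card.factorial * ((T \ S).card.factorial *
        (n - (S ∪ T).card).factorial)) := by
  classical
  set f : Fin n → Bool × Bool := fun i => (decide (i ∈ S), decide (i ∈ T)) with hf
  have hcond : ∀ σ : Perm (Fin n), (f ∘ ⇑σ = f) ↔ (Stab σ S ∧ Stab σ T) := by
    intro σ
    rw [funext_iff]
    constructor
    · intro h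
      constructor
      · intro i
        have h2 := (h i)
        rw [hf] at h2
        simp only [Function.comp_apply, Prod.mk.injEq, decide_eq_decide] at h2
        exact h2.1.symm
      · intro i
        have h2 := (h i)
        rw [hf] at h2
        simp only [Function.comp_apply, Prod.mk.injEq, decide_eq_decide] at h2
        exact h2.2.symm
    · rintro ⟨h1, h2⟩ i
      rw [hf]
      simp only [Function.comp_apply, Prod.mk.injEq, decide_eq_decide]
      exact ⟨(h1 i).symm, (h2 i).symm⟩
  have hcard := DomMulAct.stabilizer_card f
  rw [Fintype.card_subtype] at hcard
  have hfilter : (Finset.filter (fun σ : Perm (Fin n) => Stab σ S ∧ Stab σ T) Finset.univ) =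
      (Finset.filter (fun σ : Perm (Fin n) => f ∘ ⇑σ = f) Finset.univ) := by
    apply Finset.filter_congr
    intro σ _
    exact (hcond σ).symm
  rw [hfilter, hcard, Fintype.prod_prod_type]
  rw [Fintype.prod_bool]
  conv_lhs => rw [Fintype.prod_bool, Fintype.prod_bool]
  have c1 : Fintype.card {a : Fin n // f a = (true, true)} = (S ∩ T).card := by
    rw [Fintype.card_subtype]
    congr 1
    ext a
    simp [hf, Prod.ext_iff]
  have c2 : Fintype.card {a : Fin n // f a = (true, false)} = (S \ T).card := by
    rw [Fintype.card_subtype]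
    congr 1
    ext a
    simp [hf, Prod.ext_iff]
  have c3 : Fintype.card {a : Fin n // f a = (false, true)} = (T \ S).card := by
    rw [Fintype.card_subtype]
    congr 1
    ext a
    simp [hf, Prod.ext_iff]
    tauto
  have c4 : Fintype.card {a : Fin n // f a = (false, false)} = n - (S ∪ T).card := by
    rw [Fintype.card_subtype]
    have : (Finset.filter (fun a : Fin n => f a = (false, false)) Finset.univ) = (S ∪ T)ᶜ := by
      ext a
      simp [hf, Prod.ext_iff]
    rw [this, Finset.card_compl, Fintype.card_fin]
  rw [c1, c2, c3, c4]
  ring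

/-- the inner τ-sum -/
theorem inner_sum (σ : Perm (Fin n)) (S : Finset (Fin n)) :
    ∑ τ : Perm (Fin n), ((Perm.sign τ : ℤ) : ℚ[X]) *
      ((∏ i ∈ S, (if i = σ (τ i) then (1:ℚ[X]) else 0)) *
        ∏ i ∈ univ \ S, (if τ i = i then (1:ℚ[X]) else 0)) = gp σ S := by
  by_cases h : Stab σ S
  · rw [Finset.sum_eq_single ((restr σ S h)⁻¹)]
    · have e1 : (∏ i ∈ S, (if i = σ ((restr σ S h)⁻¹ i) then (1:ℚ[X]) else 0)) = 1 := by
        apply Finset.prod_eq_one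
        intro i hi
        simp [hi]
      have e2 : (∏ i ∈ univ \ S, (if (restr σ S h)⁻¹ i = i then (1:ℚ[X]) else 0)) = 1 := by
        apply Finset.prod_eq_one
        intro i hi
        rw [Finset.mem_sdiff] at hi
        simp [hi.2]
      rw [e1, e2, gp, dif_pos h, Perm.sign_inv, mul_one, mul_one]
    · intro τ _ hne
      by_cases hc1 : ∀ i ∈ S, i = σ (τ i)
      · by_cases hc2 : ∀ i ∈ univ \ S, τ i = i
        · exfalso
          apply hne
          apply Equiv.ext
          intro i
          by_cases hi : i ∈ S
          · rw [restr_inv_apply, if_pos hi]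
            exact (Equiv.eq_symm_apply σ).mpr (hc1 i hi).symm
          · rw [restr_inv_apply, if_neg hi]
            exact hc2 i (Finset.mem_sdiff.mpr ⟨Finset.mem_univ i, hi⟩)
        · push_neg at hc2
          obtain ⟨i, hi, hne2⟩ := hc2
          rw [Finset.prod_eq_zero hi (show (if τ i = i then (1:ℚ[X]) else 0) = 0 from if_neg hne2),
            mul_zero, mul_zero]
      · push_neg at hc1
        obtain ⟨i, hi, hne1⟩ := hc1
        rw [Finset.prod_eq_zero hi
          (show (if i = σ (τ i) then (1:ℚ[X]) else 0) = 0 from if_neg hne1), zero_mul, mul_zero]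
    · intro hτ
      exact absurd (Finset.mem_univ _) hτ
  · rw [gp, dif_neg h]
    apply Finset.sum_eq_zero
    intro τ _
    by_cases hc1 : ∀ i ∈ S, i = σ (τ i)
    · by_cases hc2 : ∀ i ∈ univ \ S, τ i = i
      · exfalso
        apply h
        have hfix : ∀ i ∈ S, σ⁻¹ i ∈ S := by
          intro i hi
          by_contra hc
          have h1 : τ (σ⁻¹ i) = σ⁻¹ i :=
            hc2 _ (Finset.mem_sdiff.mpr ⟨Finset.mem_univ _, hc⟩)
          have h2 : τ i = σ⁻¹ i := (Equiv.eq_symm_apply σ).mpr (hc1 i hi).symm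
          have : i = σ⁻¹ i := τ.injective (h2.trans h1.symm)
          exact hc (this ▸ hi)
        have himg : Finset.image (⇑σ⁻¹) S = S := by
          apply Finset.eq_of_subset_of_card_le
          · intro j hj
            rw [Finset.mem_image] at hj
            obtain ⟨i, hi, rfl⟩ := hj
            exact hfix i hi
          · rw [Finset.card_image_of_injective _ (Equiv.injective _)]
        intro i
        constructor
        · intro hi
          conv at hi => rw [← himg]
          rw [Finset.mem_image] at hi
          obtain ⟨j, hj, hji⟩ := hi
          have : j = σ i := by
            rw [← hji]; simp
          exact this ▸ hj
        · intro hi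
          have := hfix _ hi
          simpa using this
      · push_neg at hc2
        obtain ⟨i, hi, hne2⟩ := hc2
        rw [Finset.prod_eq_zero hi (show (if τ i = i then (1:ℚ[X]) else 0) = 0 from if_neg hne2),
          mul_zero, mul_zero]
    · push_neg at hc1
      obtain ⟨i, hi, hne1⟩ := hc1
      rw [Finset.prod_eq_zero hi
        (show (if i = σ (τ i) then (1:ℚ[X]) else 0) = 0 from if_neg hne1), zero_mul, mul_zero]

theorem det_expand (σ : Perm (Fin n)) :
    det ((1 : Matrix (Fin n) (Fin n) ℚ[X]) - (X : ℚ[X]) • σ.permMatrix ℚ[X]) =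
      ∑ S ∈ (univ : Finset (Fin n)).powerset, (-X : ℚ[X]) ^ S.card * gp σ S := by
  have entry : ∀ (τ : Perm (Fin n)) (i : Fin n),
      ((1 : Matrix (Fin n) (Fin n) ℚ[X]) - (X : ℚ[X]) • σ.permMatrix ℚ[X]) (τ i) i =
        ((-X) * (if i = σ (τ i) then 1 else 0)) + (if τ i = i then 1 else 0) := by
    intro τ i
    rw [Matrix.sub_apply, Matrix.smul_apply, Matrix.one_apply]
    simp only [Equiv.Perm.permMatrix, PEquiv.toMatrix_apply, Equiv.toPEquiv_apply,
      Option.mem_some_iff, smul_eq_mul]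
    have : (if σ (τ i) = i then (1:ℚ[X]) else 0) = (if i = σ (τ i) then 1 else 0) := by
      by_cases hc : σ (τ i) = i
      · rw [if_pos hc, if_pos hc.symm]
      · rw [if_neg hc, if_neg (fun h => hc h.symm)]
    rw [this]
    ring
  calc
    det ((1 : Matrix (Fin n) (Fin n) ℚ[X]) - (X : ℚ[X]) • σ.permMatrix ℚ[X])
        = ∑ τ : Perm (Fin n), ∑ S ∈ (univ : Finset (Fin n)).powerset,
            (-X : ℚ[X]) ^ S.card * (((Perm.sign τ : ℤ) : ℚ[X]) *
              ((∏ i ∈ S, (if i = σ (τ i) then (1:ℚ[X]) else 0)) *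
                ∏ i ∈ univ \ S, (if τ i = i then (1:ℚ[X]) else 0))) := by
      rw [Matrix.det_apply]
      apply Finset.sum_congr rfl
      intro τ _
      rw [Finset.prod_congr rfl (fun i _ => entry τ i), Finset.prod_add, Finset.smul_sum]
      apply Finset.sum_congr rfl
      intro S _
      rw [Finset.prod_mul_distrib, Finset.prod_const, Units.smul_def, zsmul_eq_mul]
      push_cast
      ring
    _ = ∑ S ∈ (univ : Finset (Fin n)).powerset, (-X : ℚ[X]) ^ S.card * gp σ S := by
      rw [Finset.sum_comm]
      apply Finset.sum_congr rfl
      intro S _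
      rw [← Finset.mul_sum, inner_sum]


theorem gp_mul_gp {S T : Finset (Fin n)} (hST : (S \ T).card ≤ 1) (hTS : (T \ S).card ≤ 1)
    (σ : Perm (Fin n)) :
    gp σ S * gp σ T = if Stab σ S ∧ Stab σ T then 1 else 0 := by
  by_cases h1 : Stab σ S
  · by_cases h2 : Stab σ T
    · rw [if_pos ⟨h1, h2⟩]
      have hint : Stab σ (S ∩ T) := fun i => by
        rw [Finset.mem_inter, Finset.mem_inter]
        exact and_congr (h1 i) (h2 i)
      have hsd1 : Stab σ (S \ T) := fun i => by
        rw [Finset.mem_sdiff, Finset.mem_sdiff]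
        exact and_congr (h1 i) (not_congr (h2 i))
      have hsd2 : Stab σ (T \ S) := fun i => by
        rw [Finset.mem_sdiff, Finset.mem_sdiff]
        exact and_congr (h2 i) (not_congr (h1 i))
      have hg1 : gp σ S = gp σ (S ∩ T) := by
        conv_lhs => rw [← Finset.sdiff_union_inter S T]
        rw [gp_union (Finset.disjoint_sdiff_inter S T) hsd1 hint,
          gp_eq_one hsd1 (fun i hi => Finset.card_le_one.mp hST (σ i) ((hsd1 i).mp hi) i hi),
          one_mul]
      have hg2 : gp σ T = gp σ (S ∩ T) := by
        conv_lhs => rw [← Finset.sdiff_union_inter T S]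
        rw [gp_union (Finset.disjoint_sdiff_inter T S) hsd2
            (fun i => by rw [Finset.inter_comm T S]; exact hint i),
          gp_eq_one hsd2 (fun i hi => Finset.card_le_one.mp hTS (σ i) ((hsd2 i).mp hi) i hi),
          one_mul]
        congr 1
        exact Finset.inter_comm T S
      rw [hg1, hg2, gp, dif_pos hint]
      rcases Int.units_eq_one_or (Perm.sign (restr σ (S ∩ T) hint)) with h | h <;>
        rw [h] <;> norm_num
    · rw [if_neg (fun hc => h2 hc.2)]
      have hz : gp σ T = 0 := by simp only [gp, dif_neg h2]
      rw [hz, mul_zero]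
  · rw [if_neg (fun hc => h1 hc.1)]
    have hz : gp σ S = 0 := by simp only [gp, dif_neg h1]
    rw [hz, zero_mul]

noncomputable def e2 : ℕ → ℚ[X] := fun m => if m ≤ 1 then 1 else 0

theorem sum_gp (S T : Finset (Fin n)) :
    ∑ σ : Perm (Fin n), gp σ S * gp σ T =
      e2 (S \ T).card * e2 (T \ S).card *
        (((S ∩ T).card.factorial * (n - (S ∪ T).card).factorial : ℕ) : ℚ[X]) := by
  by_cases hST : (S \ T).card ≤ 1
  · by_cases hTS : (T \ S).card ≤ 1
    · rw [Finset.sum_congr rfl (fun σ _ => gp_mul_gp hST hTS σ), Finset.sum_boole]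
      have f1 : (S \ T).card.factorial = 1 := by
        rcases Nat.le_one_iff_eq_zero_or_eq_one.mp hST with h | h <;> simp [h]
      have f2 : (T \ S).card.factorial = 1 := by
        rcases Nat.le_one_iff_eq_zero_or_eq_one.mp hTS with h | h <;> simp [h]
      have hc := card_stab S T
      rw [f1, f2, one_mul, one_mul] at hc
      rw [hc, e2, e2]
      simp only [if_pos hST, if_pos hTS, one_mul]
    · push_neg at hTS
      obtain ⟨i, hi, j, hj, hij⟩ := Finset.one_lt_card.mp hTS
      have : ∑ σ : Perm (Fin n), gp σ S * gp σ T = ∑ σ : Perm (Fin n), gp σ T * gp σ S :=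
        Finset.sum_congr rfl (fun σ _ => mul_comm _ _)
      rw [this, sum_gp_eq_zero hi hj hij]
      have : e2 (T \ S).card = 0 := by simp [e2]; omega
      rw [this]
      ring
  · push_neg at hST
    obtain ⟨i, hi, j, hj, hij⟩ := Finset.one_lt_card.mp hST
    rw [sum_gp_eq_zero hi hj hij]
    have : e2 (S \ T).card = 0 := by simp [e2]; omega
    rw [this]
    ring

theorem sum_powerset_card {α : Type*} [DecidableEq α] (C : Finset α) (h : ℕ → ℚ[X]) :
    ∑ W ∈ C.powerset, h W.card = ∑ j ∈ range (C.card + 1), (C.card.choose j) • h j := by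
  rw [Finset.sum_powerset]
  apply Finset.sum_congr rfl
  intro j _
  rw [Finset.sum_congr rfl (fun W hW => by rw [(Finset.mem_powersetCard.mp hW).2]),
    Finset.sum_const, Finset.card_powersetCard]
theorem sumA (s : ℕ) :
    ∑ j ∈ range (s + 1), (s.choose j) • ((-X : ℚ[X]) ^ j * e2 (s - j) * (j.factorial : ℚ[X])) =
      (s.factorial : ℚ[X]) * (-X) ^ s +
        ((s * (s-1).factorial : ℕ) : ℚ[X]) * (-X) ^ (s - 1) := by
  rcases s with _ | k
  · simp [e2]
  · rw [Finset.sum_eq_add_of_mem (k+1) k (by simp) (by simp) (by omega) ?side]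
    · have h1 : e2 ((k+1) - (k+1)) = 1 := by simp [e2]
      have h2 : e2 ((k+1) - k) = 1 := by simp [e2]
      rw [h1, h2, Nat.choose_self, Nat.choose_succ_self_right]
      have h3 : k + 1 - 1 = k := by omega
      rw [h3]
      push_cast [nsmul_eq_mul]
      ring
    · intro c hc hcc
      have : ¬ ((k+1) - c ≤ 1) := by
        rw [Finset.mem_range] at hc
        omega
      simp [e2, this]

theorem sumB (c m : ℕ) :
    ∑ j ∈ range (c + 1), (c.choose j) • ((-X : ℚ[X]) ^ j * e2 j * ((m - j).factorial : ℚ[X])) =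
      (m.factorial : ℚ[X]) + (c : ℚ[X]) * (-X) * ((m-1).factorial : ℚ[X]) := by
  rcases c with _ | k
  · simp [e2]
  · rw [Finset.sum_eq_add_of_mem 0 1 (by simp) (by simp) (by omega) ?side]
    · have h1 : e2 0 = 1 := by simp [e2]
      have h2 : e2 1 = 1 := by simp [e2]
      rw [h1, h2, Nat.choose_zero_right, Nat.choose_one_right, Nat.sub_zero]
      push_cast [nsmul_eq_mul]
      ring
    · intro j hj hjj
      have : e2 j = 0 := by
        simp only [e2, if_neg (by omega : ¬ (j ≤ 1))]
      simp [this]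
theorem final_sum (n : ℕ) (hn : 1 ≤ n) :
    ∑ s ∈ range (n+1), (n.choose s) •
      ((-X:ℚ[X])^s *
        (((s.factorial : ℚ[X]) * (-X)^s + ((s * (s-1).factorial : ℕ) : ℚ[X]) * (-X)^(s-1)) *
         (((n-s).factorial : ℚ[X]) + (((n-s) : ℕ) : ℚ[X]) * (-X) * ((n-s-1).factorial : ℚ[X]))))
    = (n.factorial : ℚ[X]) * ((1 - X)^2 * ∑ k ∈ range n, (X:ℚ[X])^(2*k)) := by
  have point : ∀ s ∈ range (n+1), (n.choose s) •
      ((-X:ℚ[X])^s *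
        (((s.factorial : ℚ[X]) * (-X)^s + ((s * (s-1).factorial : ℕ) : ℚ[X]) * (-X)^(s-1)) *
         (((n-s).factorial : ℚ[X]) + (((n-s) : ℕ) : ℚ[X]) * (-X) * ((n-s-1).factorial : ℚ[X])))) =
      (n.factorial:ℚ[X]) * X^(2*s)
        - (if 1 ≤ s then (n.factorial:ℚ[X]) * X^(2*s-1) else 0)
        - (if s + 1 ≤ n then (n.factorial:ℚ[X]) * X^(2*s+1) else 0)
        + (if 1 ≤ s ∧ s + 1 ≤ n then (n.factorial:ℚ[X]) * X^(2*s) else 0) := by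
    intro s hs
    rw [Finset.mem_range] at hs
    rw [nsmul_eq_mul]
    rcases Nat.eq_zero_or_pos s with rfl | hpos
    · rw [if_neg (by omega), if_pos (by omega), if_neg (by simp)]
      have key : ((n:ℚ[X]) * ((n-1).factorial : ℚ[X])) = (n.factorial : ℚ[X]) := by
        rw [← Nat.cast_mul, Nat.mul_factorial_pred (by omega)]
      simp only [Nat.choose_zero_right, Nat.cast_one, Nat.sub_zero, Nat.zero_mul,
        Nat.cast_zero, Nat.factorial_zero]
      linear_combination (-(X:ℚ[X])) * key
    · obtain ⟨k, rfl⟩ : ∃ k, s = k + 1 := ⟨s - 1, by omega⟩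
      have hsub1 : k + 1 - 1 = k := by omega
      have hfac : (((k+1) * k.factorial : ℕ) : ℚ[X]) = ((k+1).factorial : ℚ[X]) := by
        rw [Nat.factorial_succ]
      rw [hsub1, hfac]
      by_cases hlt : k + 2 ≤ n
      · rw [if_pos (by omega), if_pos (by omega), if_pos ⟨by omega, by omega⟩]
        have hd : (((n-(k+1)) : ℕ) : ℚ[X]) * (-X) * ((n-(k+1)-1).factorial : ℚ[X]) =
            ((n-(k+1)).factorial : ℚ[X]) * (-X) := by
          rw [mul_comm ((((n-(k+1)) : ℕ)) : ℚ[X]) (-X), mul_assoc, ← Nat.cast_mul,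
            Nat.mul_factorial_pred (by omega : n - (k+1) ≠ 0)]
          ring
        rw [hd]
        have he : 2*(k+1)-1 = 2*k+1 := by omega
        rw [he]
        have hC : ((n.choose (k+1) * (k+1).factorial * (n-(k+1)).factorial : ℕ) : ℚ[X]) =
            (n.factorial : ℚ[X]) := by
          rw [Nat.choose_mul_factorial_mul_factorial (by omega : k+1 ≤ n)]
        push_cast at hC
        rw [← hC]
        ring_nf
        rw [Even.neg_one_pow ⟨k, by ring⟩]
        ring
      · obtain rfl : n = k+1 := by omega
        rw [if_pos (by omega), if_neg (by omega), if_neg (by omega)]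
        have he : 2*(k+1)-1 = 2*k+1 := by omega
        rw [he]
        simp only [Nat.choose_self, Nat.cast_one, Nat.sub_self, Nat.factorial_zero,
          Nat.cast_zero]
        ring_nf
        rw [Even.neg_one_pow ⟨k, by ring⟩]
        ring
  rw [Finset.sum_congr rfl point]
  obtain ⟨m, rfl⟩ : ∃ m, n = m + 1 := ⟨n - 1, by omega⟩
  rw [Finset.sum_add_distrib, Finset.sum_sub_distrib, Finset.sum_sub_distrib]
  have hA : ∑ s ∈ range (m+1+1), ((m+1).factorial:ℚ[X]) * X^(2*s) =
      (∑ s ∈ range (m+1), ((m+1).factorial:ℚ[X]) * X^(2*s)) + ((m+1).factorial:ℚ[X]) * X^(2*(m+1)) :=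
    Finset.sum_range_succ _ _
  have hB : ∑ s ∈ range (m+1+1), (if 1 ≤ s then ((m+1).factorial:ℚ[X]) * X^(2*s-1) else 0) =
      ∑ s ∈ range (m+1), ((m+1).factorial:ℚ[X]) * X^(2*s+1) := by
    rw [Finset.sum_range_succ']
    simp only [if_neg (by omega : ¬ (1 ≤ 0)), add_zero]
    apply Finset.sum_congr rfl
    intro s _
    rw [if_pos (by omega)]
    congr 1
    try omega
  have hC : ∑ s ∈ range (m+1+1), (if s + 1 ≤ m+1 then ((m+1).factorial:ℚ[X]) * X^(2*s+1) else 0) =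
      ∑ s ∈ range (m+1), ((m+1).factorial:ℚ[X]) * X^(2*s+1) := by
    rw [Finset.sum_range_succ, if_neg (by omega), add_zero]
    apply Finset.sum_congr rfl
    intro s hs
    rw [Finset.mem_range] at hs
    rw [if_pos (by omega)]
  have hD : ∑ s ∈ range (m+1+1),
      (if 1 ≤ s ∧ s + 1 ≤ m+1 then ((m+1).factorial:ℚ[X]) * X^(2*s) else 0) =
      ∑ s ∈ range m, ((m+1).factorial:ℚ[X]) * X^(2*s+2) := by
    rw [Finset.sum_range_succ, if_neg (by omega), add_zero, Finset.sum_range_succ']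
    rw [if_neg (by omega), add_zero]
    apply Finset.sum_congr rfl
    intro s hs
    rw [Finset.mem_range] at hs
    rw [if_pos ⟨by omega, by omega⟩]
    congr 1
    try omega
  rw [hA, hB, hC, hD]
  have hD2 : ∑ s ∈ range m, ((m+1).factorial:ℚ[X]) * X^(2*s+2) =
      (∑ s ∈ range (m+1), ((m+1).factorial:ℚ[X]) * X^(2*s+2)) - ((m+1).factorial:ℚ[X]) * X^(2*m+2) := by
    rw [Finset.sum_range_succ]
    ring
  rw [hD2]
  have hcancel : ((m+1).factorial:ℚ[X]) * X^(2*(m+1)) = ((m+1).factorial:ℚ[X]) * X^(2*m+2) := by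
    have : 2*(m+1) = 2*m+2 := by omega
    rw [this]
  rw [hcancel]
  have hrhs : ((m+1).factorial:ℚ[X]) * ((1 - X)^2 * ∑ k ∈ range (m+1), (X:ℚ[X])^(2*k)) =
      ∑ k ∈ range (m+1), ((m+1).factorial:ℚ[X]) * ((1-X)^2 * X^(2*k)) := by
    rw [Finset.mul_sum, Finset.mul_sum]
  have Hmain : (∑ s ∈ range (m+1), ((m+1).factorial:ℚ[X]) * X^(2*s))
      - (∑ s ∈ range (m+1), ((m+1).factorial:ℚ[X]) * X^(2*s+1))
      - (∑ s ∈ range (m+1), ((m+1).factorial:ℚ[X]) * X^(2*s+1))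
      + (∑ s ∈ range (m+1), ((m+1).factorial:ℚ[X]) * X^(2*s+2))
      = ((m+1).factorial:ℚ[X]) * ((1 - X)^2 * ∑ k ∈ range (m+1), (X:ℚ[X])^(2*k)) := by
    rw [hrhs, ← Finset.sum_sub_distrib, ← Finset.sum_sub_distrib, ← Finset.sum_add_distrib]
    exact Finset.sum_congr rfl (fun s _ => by ring)
  linear_combination Hmain

theorem repar (S : Finset (Fin n)) :
    ∑ T ∈ (univ : Finset (Fin n)).powerset,
        ((-X : ℚ[X])^S.card * (-X)^T.card) *
          (e2 (S \ T).card * e2 (T \ S).card *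
            (((S ∩ T).card.factorial * (n - (S ∪ T).card).factorial : ℕ) : ℚ[X])) =
      (-X : ℚ[X])^S.card *
        ((∑ U ∈ S.powerset, (-X : ℚ[X])^U.card * e2 ((S \ U).card) * (U.card.factorial : ℚ[X])) *
         (∑ W ∈ Sᶜ.powerset,
            (-X : ℚ[X])^W.card * e2 W.card * ((n - S.card - W.card).factorial : ℚ[X]))) := by
  have hr : (-X : ℚ[X])^S.card *
      ((∑ U ∈ S.powerset, (-X : ℚ[X])^U.card * e2 ((S \ U).card) * (U.card.factorial : ℚ[X])) *
       (∑ W ∈ Sᶜ.powerset,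
          (-X : ℚ[X])^W.card * e2 W.card * ((n - S.card - W.card).factorial : ℚ[X]))) =
      ∑ p ∈ S.powerset ×ˢ Sᶜ.powerset,
        (-X : ℚ[X])^S.card *
          (((-X : ℚ[X])^p.1.card * e2 ((S \ p.1).card) * (p.1.card.factorial : ℚ[X])) *
           ((-X : ℚ[X])^p.2.card * e2 p.2.card * ((n - S.card - p.2.card).factorial : ℚ[X]))) := by
    rw [Finset.sum_mul_sum, Finset.mul_sum, Finset.sum_product]
    apply Finset.sum_congr rfl
    intro U _
    rw [Finset.mul_sum]
  rw [hr]
  apply Finset.sum_nbij' (i := fun T => (S ∩ T, T \ S)) (j := fun p => p.1 ∪ p.2)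
  · intro T _
    rw [Finset.mem_product]
    constructor
    · exact Finset.mem_powerset.mpr Finset.inter_subset_left
    · apply Finset.mem_powerset.mpr
      intro a ha
      rw [Finset.mem_compl]
      exact (Finset.mem_sdiff.mp ha).2
  · intro p _
    exact Finset.mem_powerset.mpr (Finset.subset_univ _)
  · intro T _
    ext a
    simp only [Finset.mem_union, Finset.mem_inter, Finset.mem_sdiff]
    tauto
  · intro p hp
    rw [Finset.mem_product] at hp
    have hU : p.1 ⊆ S := Finset.mem_powerset.mp hp.1
    have hW : ∀ a ∈ p.2, a ∉ S := fun a ha =>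
      Finset.mem_compl.mp (Finset.mem_powerset.mp hp.2 ha)
    have e1 : S ∩ (p.1 ∪ p.2) = p.1 := by
      ext a
      simp only [Finset.mem_inter, Finset.mem_union]
      constructor
      · rintro ⟨haS, ha | ha⟩
        · exact ha
        · exact absurd haS (hW a ha)
      · intro ha
        exact ⟨hU ha, Or.inl ha⟩
    have e2' : (p.1 ∪ p.2) \ S = p.2 := by
      ext a
      simp only [Finset.mem_sdiff, Finset.mem_union]
      constructor
      · rintro ⟨ha | ha, haS⟩
        · exact absurd (hU ha) haS
        · exact ha
      · intro ha
        exact ⟨Or.inr ha, hW a ha⟩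
    rw [e1, e2']
  · intro T _
    have hsplit : (S ∩ T).card + (T \ S).card = T.card := by
      rw [Finset.inter_comm]
      exact Finset.card_inter_add_card_sdiff T S
    have e1 : S \ (S ∩ T) = S \ T := Finset.sdiff_inter_self_left S T
    have e2' : (S ∩ T) ∩ T = S ∩ T := by
      rw [Finset.inter_assoc, Finset.inter_self]
    have e3 : n - (S ∪ T).card = n - S.card - (T \ S).card := by
      have : (S ∪ T).card = S.card + (T \ S).card := by
        rw [← Finset.union_sdiff_self_eq_union,
          Finset.card_union_of_disjoint Finset.disjoint_sdiff]
      rw [this, Nat.sub_sub]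
    rw [e1, e3, ← hsplit, pow_add]
    push_cast
    ring

end AvgDet

open AvgDet Equiv Finset in
/-- For every `n ≥ 1`, the average of `det (I - x • M_σ)²` over `σ ∈ S_n` equals
`(1 - x)² ∑_{k=0}^{n-1} x^{2k}`. -/
theorem average_det_sq_one_sub_X_smul_permMatrix (n : ℕ) (hn : 1 ≤ n) :
    ((n.factorial : ℚ)⁻¹ : ℚ) •
        ∑ σ : Equiv.Perm (Fin n),
          (Matrix.det ((1 : Matrix (Fin n) (Fin n) ℚ[X]) - (X : ℚ[X]) • σ.permMatrix ℚ[X])) ^ 2 =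
      (1 - (X : ℚ[X])) ^ 2 * ∑ k ∈ Finset.range n, (X : ℚ[X]) ^ (2 * k) := by
  have key : ∑ σ : Equiv.Perm (Fin n),
      (Matrix.det ((1 : Matrix (Fin n) (Fin n) ℚ[X]) - (X : ℚ[X]) • σ.permMatrix ℚ[X])) ^ 2 =
      (n.factorial : ℚ[X]) *
        ((1 - (X : ℚ[X])) ^ 2 * ∑ k ∈ Finset.range n, (X : ℚ[X]) ^ (2 * k)) := by
    calc ∑ σ : Equiv.Perm (Fin n),
        (Matrix.det ((1 : Matrix (Fin n) (Fin n) ℚ[X]) - (X : ℚ[X]) • σ.permMatrix ℚ[X])) ^ 2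
        = ∑ σ : Equiv.Perm (Fin n), ∑ S ∈ (univ : Finset (Fin n)).powerset,
            ∑ T ∈ (univ : Finset (Fin n)).powerset,
              ((-X : ℚ[X])^S.card * gp σ S) * ((-X : ℚ[X])^T.card * gp σ T) := by
          apply Finset.sum_congr rfl
          intro σ _
          rw [det_expand σ, sq, Finset.sum_mul_sum]
      _ = ∑ S ∈ (univ : Finset (Fin n)).powerset, ∑ T ∈ (univ : Finset (Fin n)).powerset,
            ((-X : ℚ[X])^S.card * (-X : ℚ[X])^T.card) * ∑ σ : Equiv.Perm (Fin n), gp σ S * gp σ T := by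
          rw [Finset.sum_comm]
          apply Finset.sum_congr rfl
          intro S _
          rw [Finset.sum_comm]
          apply Finset.sum_congr rfl
          intro T _
          rw [Finset.mul_sum]
          apply Finset.sum_congr rfl
          intro σ _
          ring
      _ = ∑ S ∈ (univ : Finset (Fin n)).powerset,
            (-X : ℚ[X])^S.card *
              ((∑ U ∈ S.powerset, (-X : ℚ[X])^U.card * e2 ((S \ U).card) * (U.card.factorial : ℚ[X])) *
               (∑ W ∈ Sᶜ.powerset,
                  (-X : ℚ[X])^W.card * e2 W.card * ((n - S.card - W.card).factorial : ℚ[X]))) := by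
          apply Finset.sum_congr rfl
          intro S _
          rw [← repar S]
          apply Finset.sum_congr rfl
          intro T _
          rw [sum_gp]
      _ = ∑ S ∈ (univ : Finset (Fin n)).powerset,
            (-X : ℚ[X])^S.card *
              (((S.card.factorial : ℚ[X]) * (-X)^S.card +
                  ((S.card * (S.card - 1).factorial : ℕ) : ℚ[X]) * (-X)^(S.card - 1)) *
               (((n - S.card).factorial : ℚ[X]) +
                  (((n - S.card) : ℕ) : ℚ[X]) * (-X) * ((n - S.card - 1).factorial : ℚ[X]))) := by
          apply Finset.sum_congr rfl
          intro S _
          congr 1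
          congr 1
          · have : ∀ U ∈ S.powerset,
                (-X : ℚ[X])^U.card * e2 ((S \ U).card) * (U.card.factorial : ℚ[X]) =
                (-X : ℚ[X])^U.card * e2 (S.card - U.card) * (U.card.factorial : ℚ[X]) := by
              intro U hU
              rw [Finset.card_sdiff_of_subset (Finset.mem_powerset.mp hU)]
            rw [Finset.sum_congr rfl this,
              sum_powerset_card S (fun j => (-X : ℚ[X])^j * e2 (S.card - j) * (j.factorial : ℚ[X])),
              sumA]
          · rw [sum_powerset_card Sᶜ
                (fun j => (-X : ℚ[X])^j * e2 j * ((n - S.card - j).factorial : ℚ[X]))]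
            have hcc : Sᶜ.card = n - S.card := by
              rw [Finset.card_compl, Fintype.card_fin]
            rw [hcc, sumB (n - S.card) (n - S.card)]
      _ = ∑ s ∈ range (n+1), (n.choose s) •
            ((-X:ℚ[X])^s *
              (((s.factorial : ℚ[X]) * (-X)^s + ((s * (s-1).factorial : ℕ) : ℚ[X]) * (-X)^(s-1)) *
               (((n-s).factorial : ℚ[X]) +
                  (((n-s) : ℕ) : ℚ[X]) * (-X) * ((n-s-1).factorial : ℚ[X])))) := by
          have := sum_powerset_card (univ : Finset (Fin n))
            (fun s => (-X:ℚ[X])^s *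
              (((s.factorial : ℚ[X]) * (-X)^s + ((s * (s-1).factorial : ℕ) : ℚ[X]) * (-X)^(s-1)) *
               (((n-s).factorial : ℚ[X]) +
                  (((n-s) : ℕ) : ℚ[X]) * (-X) * ((n-s-1).factorial : ℚ[X]))))
          rw [Finset.card_univ, Fintype.card_fin] at this
          exact this
      _ = (n.factorial : ℚ[X]) *
            ((1 - (X : ℚ[X])) ^ 2 * ∑ k ∈ Finset.range n, (X : ℚ[X]) ^ (2 * k)) := final_sum n hn
  rw [key]
  have hfac : ((n.factorial : ℚ[X])) *
      ((1 - (X : ℚ[X])) ^ 2 * ∑ k ∈ Finset.range n, (X : ℚ[X]) ^ (2 * k)) =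
      ((n.factorial : ℚ) : ℚ) •
        ((1 - (X : ℚ[X])) ^ 2 * ∑ k ∈ Finset.range n, (X : ℚ[X]) ^ (2 * k)) := by
    rw [Polynomial.smul_eq_C_mul, Polynomial.C_eq_natCast]
  rw [hfac, smul_smul, inv_mul_cancel₀ (by exact_mod_cast Nat.factorial_ne_zero n), one_smul]
end

section
/- For any r, n ≥ 1, the polynomial Q_n^r(x) := (1/n!) · ∑_{σ ∈ S_n} det(I_n - x·M_σ)^r has integer coefficients, i.e., Q_n^r(x) ∈ ℤ[x]. -/
open Polynomial Matrix Finset Equiv Kronecker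

namespace AvgDetAux

/-- If `f` acts on `α` as `g` acts on `β` through an injection `e`, fixing everything
outside the range of `e`, then `f` and `g` have the same sign. -/
lemma sign_transfer {α β : Type*} [Fintype α] [DecidableEq α] [Fintype β] [DecidableEq β]
    (f : Perm α) (g : Perm β) (e : β → α) (he : Function.Injective e)
    (h1 : ∀ i, f (e i) = e (g i)) (h2 : ∀ x, x ∉ Set.range e → f x = x) :
    Equiv.Perm.sign f = Equiv.Perm.sign g := by
  letI I : Fintype {x // x ∈ Finset.image e Finset.univ} := Subtype.fintype _
  have hbij : Function.Bijective (fun i : β => (⟨e i, Finset.mem_image_of_mem e (Finset.mem_univ i)⟩ :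
      {x // x ∈ Finset.image e Finset.univ})) := by
    constructor
    · intro a b hab
      exact he (congrArg Subtype.val hab)
    · rintro ⟨x, hx⟩
      obtain ⟨i, _, rfl⟩ := Finset.mem_image.mp hx
      exact ⟨i, rfl⟩
  let e' : β ≃ {x // x ∈ Finset.image e Finset.univ} := Equiv.ofBijective _ hbij
  have he' : ∀ i : β, (e' i : α) = e i := fun i => rfl
  have hf : f = Equiv.Perm.ofSubtype (e'.permCongr g) := by
    refine Equiv.ext fun x => ?_
    by_cases hx : x ∈ Finset.image e Finset.univ
    · obtain ⟨i, _, rfl⟩ := Finset.mem_image.mp hx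
      rw [Equiv.Perm.ofSubtype_apply_of_mem (e'.permCongr g)
        (Finset.mem_image_of_mem e (Finset.mem_univ i))]
      have h3 : (⟨e i, Finset.mem_image_of_mem e (Finset.mem_univ i)⟩ :
          {x // x ∈ Finset.image e Finset.univ}) = e' i := rfl
      rw [h1 i, h3, Equiv.permCongr_apply, Equiv.symm_apply_apply, he']
    · rw [Equiv.Perm.ofSubtype_apply_of_not_mem (e'.permCongr g) hx, h2 x]
      intro ⟨i, hi⟩
      exact hx (hi ▸ Finset.mem_image_of_mem e (Finset.mem_univ i))
  rw [hf, Equiv.Perm.sign_ofSubtype (e'.permCongr g), Equiv.Perm.sign_permCongr]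


variable {S : Type*} [Fintype S] [LinearOrder S] [DecidableEq S] (k : ℕ)

/-- The type of `k`-element subsets of `S`. -/
abbrev K (S : Type*) (k : ℕ) := {U : Finset S // U.card = k}

/-- Enumeration of a `k`-subset. -/
def enumF (U : K S k) : Fin k → S := U.1.orderEmbOfFin U.2

lemma enumF_injective (U : K S k) : Function.Injective (enumF k U) :=
  (U.1.orderEmbOfFin U.2).injective

lemma enumF_mem (U : K S k) (i : Fin k) : enumF k U i ∈ U.1 :=
  Finset.orderEmbOfFin_mem _ _ _

lemma mem_range_enumF (U : K S k) (x : S) : x ∈ Set.range (enumF k U) ↔ x ∈ U.1 := by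
  rw [enumF, Finset.range_orderEmbOfFin]; simp

/-- Image of a `k`-subset under a permutation. -/
def imgK (τ : Perm S) (U : K S k) : K S k :=
  ⟨U.1.image τ, by rw [Finset.card_image_of_injective _ τ.injective]; exact U.2⟩

lemma mem_imgK_iff (τ : Perm S) (U : K S k) (a : S) : a ∈ U.1 ↔ τ a ∈ (imgK k τ U).1 := by
  constructor
  · exact fun h => Finset.mem_image_of_mem _ h
  · intro h
    obtain ⟨b, hb, hba⟩ := Finset.mem_image.mp h
    exact τ.injective hba ▸ hb

lemma imgK_one (U : K S k) : imgK k (1 : Perm S) U = U := by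
  apply Subtype.ext
  simp [imgK]

lemma imgK_mul (σ τ : Perm S) (U : K S k) :
    imgK k (σ * τ) U = imgK k σ (imgK k τ U) := by
  apply Subtype.ext
  simp [imgK, Finset.image_image, Function.comp_def]

/-- The permutation of `Fin k` induced by `τ` on the subset `U` (relative to the
enumerations of `U` and of its image). -/
def permOf (τ : Perm S) (U : K S k) : Perm (Fin k) :=
  (U.1.orderIsoOfFin U.2).toEquiv.trans
    ((Equiv.subtypeEquiv τ (mem_imgK_iff k τ U)).trans
      (((imgK k τ U).1.orderIsoOfFin (imgK k τ U).2).toEquiv.symm))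

lemma apply_enumF (τ : Perm S) (U : K S k) (i : Fin k) :
    τ (enumF k U i) = enumF k (imgK k τ U) (permOf k τ U i) := by
  simp only [permOf, enumF, Equiv.trans_apply, Equiv.subtypeEquiv_apply]
  rw [← Finset.coe_orderIsoOfFin_apply, ← Finset.coe_orderIsoOfFin_apply]
  simp

lemma permOf_one (U : K S k) : permOf k (1 : Perm S) U = 1 := by
  refine Equiv.ext fun i => ?_
  apply enumF_injective k U
  have h := apply_enumF k (1 : Perm S) U i
  rw [imgK_one] at h
  simpa using h.symm

lemma permOf_mul (σ τ : Perm S) (U : K S k) :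
    permOf k (σ * τ) U = permOf k σ (imgK k τ U) * permOf k τ U := by
  refine Equiv.ext fun i => ?_
  apply enumF_injective k (imgK k (σ * τ) U)
  rw [← apply_enumF]
  simp only [Equiv.Perm.coe_mul, Function.comp_apply, Perm.mul_apply]
  rw [apply_enumF k τ U i, apply_enumF k σ (imgK k τ U), ← imgK_mul]

/-- The rational sign of the induced permutation. -/
noncomputable def sgnQ (τ : Perm S) (U : K S k) : ℚ := ((Equiv.Perm.sign (permOf k τ U) : ℤ) : ℚ)

lemma sgnQ_one (U : K S k) : sgnQ k (1 : Perm S) U = 1 := by simp [sgnQ, permOf_one]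

lemma sgnQ_mul (σ τ : Perm S) (U : K S k) :
    sgnQ k (σ * τ) U = sgnQ k σ (imgK k τ U) * sgnQ k τ U := by
  simp [sgnQ, permOf_mul, ← Int.cast_mul, ← Units.val_mul]

/-- The "exterior power" matrix representation of a permutation. -/
noncomputable def N (τ : Perm S) : Matrix (K S k) (K S k) ℚ :=
  Matrix.of fun U V => if U = imgK k τ V then sgnQ k τ V else 0

lemma N_one : N k (1 : Perm S) = 1 := by
  ext U V
  rw [N, Matrix.of_apply, imgK_one, sgnQ_one, Matrix.one_apply]

lemma N_mul (σ τ : Perm S) : N k (σ * τ) = N k σ * N k τ := by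
  ext U W
  rw [Matrix.mul_apply]
  have h : ∀ V : K S k, N k σ U V * N k τ V W
      = if V = imgK k τ W then N k σ U V * sgnQ k τ W else 0 := by
    intro V
    rw [N, N, Matrix.of_apply, Matrix.of_apply]
    by_cases hV : V = imgK k τ W <;> simp [hV]
  rw [Finset.sum_congr rfl fun V _ => h V, Finset.sum_ite_eq' Finset.univ (imgK k τ W),
    if_pos (Finset.mem_univ _), N, N, Matrix.of_apply, Matrix.of_apply, imgK_mul, sgnQ_mul]
  by_cases hU : U = imgK k σ (imgK k τ W) <;> simp [hU]

lemma trace_N (τ : Perm S) :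
    Matrix.trace (N k τ) = ∑ U : K S k, if U = imgK k τ U then sgnQ k τ U else 0 := by
  rw [Matrix.trace]
  exact Finset.sum_congr rfl fun U _ => rfl

lemma mem_iff_of_imgK_eq {τ : Perm S} {U : K S k} (h : imgK k τ U = U) :
    ∀ x, x ∈ U.1 ↔ τ x ∈ U.1 := by
  intro x
  have himg : U.1.image τ = U.1 := congrArg Subtype.val h
  constructor
  · intro hx; rw [← himg]; exact Finset.mem_image_of_mem _ hx
  · intro hx
    rw [← himg] at hx
    obtain ⟨b, hb, hba⟩ := Finset.mem_image.mp hx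
    exact τ.injective hba ▸ hb

/-- The inner sum over permutations, for a fixed `k`-subset `U`. -/
lemma innerSum (τ : Perm S) (U : K S k) :
    ∑ π : Perm S, ((Equiv.Perm.sign π : ℤ) : ℚ) *
        (if ∀ i ∈ U.1, τ (π i) = i then 1 else 0) *
        (if ∀ i ∈ Finset.univ \ U.1, π i = i then 1 else 0)
      = if imgK k τ U = U then sgnQ k τ U else 0 := by
  classical
  by_cases h : imgK k τ U = U
  · rw [if_pos h]
    have hmi := mem_iff_of_imgK_eq k h
    set σU : Perm {x // x ∈ U.1} := τ.subtypePerm (fun x => (hmi x).symm) with hσU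
    set π₀ : Perm S := Equiv.Perm.ofSubtype σU⁻¹ with hπ₀
    have hπ₀mem : ∀ i (hi : i ∈ U.1), π₀ i = τ⁻¹ i := by
      intro i hi
      rw [hπ₀, Equiv.Perm.ofSubtype_apply_of_mem _ hi]
      have h5 : τ (((σU⁻¹) ⟨i, hi⟩ : {x // x ∈ U.1}) : S) = i :=
        congrArg Subtype.val (Equiv.apply_symm_apply σU ⟨i, hi⟩)
      exact (Equiv.eq_symm_apply τ).mpr h5
    have hπ₀nmem : ∀ i, i ∉ U.1 → π₀ i = i := by
      intro i hi
      rw [hπ₀, Equiv.Perm.ofSubtype_apply_of_not_mem _ hi]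
    rw [Finset.sum_eq_single_of_mem π₀ (Finset.mem_univ _)]
    · have c1 : ∀ i ∈ U.1, τ (π₀ i) = i := by
        intro i hi; rw [hπ₀mem i hi]; simp
      have c2 : ∀ i ∈ Finset.univ \ U.1, π₀ i = i := by
        intro i hi; exact hπ₀nmem i (Finset.mem_sdiff.mp hi).2
      rw [if_pos c1, if_pos c2, mul_one, mul_one]
      -- sign π₀ = sign (permOf k τ U)
      have hsgn : Equiv.Perm.sign π₀ = Equiv.Perm.sign (permOf k τ U) := by
        have hs1 : Equiv.Perm.sign π₀ = Equiv.Perm.sign (Equiv.Perm.ofSubtype σU) := by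
          rw [hπ₀, map_inv, Equiv.Perm.sign_inv]
        rw [hs1]
        refine sign_transfer _ _ (enumF k U) (enumF_injective k U) ?_ ?_
        · intro i
          rw [Equiv.Perm.ofSubtype_apply_of_mem _ (enumF_mem k U i)]
          have : ((σU ⟨enumF k U i, enumF_mem k U i⟩ : {x // x ∈ U.1}) : S)
              = τ (enumF k U i) := rfl
          rw [this, apply_enumF k τ U i, h]
        · intro x hx
          exact Equiv.Perm.ofSubtype_apply_of_not_mem _ ((mem_range_enumF k U x).not.mp hx)
      rw [hsgn]; rfl
    · intro π _ hπ
      by_cases hc1 : ∀ i ∈ U.1, τ (π i) = i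
      · by_cases hc2 : ∀ i ∈ Finset.univ \ U.1, π i = i
        · exfalso
          apply hπ
          refine Equiv.ext fun i => ?_
          by_cases hi : i ∈ U.1
          · rw [hπ₀mem i hi]
            have := hc1 i hi
            exact (Equiv.eq_symm_apply τ).mpr (hc1 i hi)
          · rw [hπ₀nmem i hi]
            exact hc2 i (Finset.mem_sdiff.mpr ⟨Finset.mem_univ i, hi⟩)
        · rw [if_neg hc2, mul_zero]
      · rw [if_neg hc1, mul_zero, zero_mul]
  · rw [if_neg h]
    refine Finset.sum_eq_zero fun π _ => ?_
    by_cases hc1 : ∀ i ∈ U.1, τ (π i) = i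
    · by_cases hc2 : ∀ i ∈ Finset.univ \ U.1, π i = i
      · exfalso
        apply h
        -- show image τ U = U
        have hmaps : ∀ i ∈ U.1, π i ∈ U.1 := by
          intro i hi
          by_contra hni
          have h1 : π (π i) = π i := hc2 (π i) (Finset.mem_sdiff.mpr ⟨Finset.mem_univ _, hni⟩)
          have h2 : π i = i := π.injective h1
          exact hni (by rw [h2]; exact hi)
        have hsub : U.1 ⊆ U.1.image τ := by
          intro i hi
          exact Finset.mem_image.mpr ⟨π i, hmaps i hi, hc1 i hi⟩
        have hcard : (U.1.image τ).card = U.1.card :=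
          Finset.card_image_of_injective _ τ.injective
        have : U.1.image τ = U.1 :=
          (Finset.eq_of_subset_of_card_le hsub (le_of_eq hcard)).symm
        exact Subtype.ext this
      · rw [if_neg hc2, mul_zero]
    · rw [if_neg hc1, mul_zero, zero_mul]

/-- Coefficient of the reverse characteristic polynomial of a permutation matrix as a trace. -/
lemma coeff_det (τ : Perm S) :
    (Matrix.det ((1 : Matrix S S ℚ[X]) - (X : ℚ[X]) • τ.permMatrix ℚ[X])).coeff k
      = (-1) ^ k * Matrix.trace (N k τ) := by
  classical
  have hentry : ∀ π : Perm S, ∀ i : S,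
      ((1 : Matrix S S ℚ[X]) - (X : ℚ[X]) • τ.permMatrix ℚ[X]) (π i) i
        = (-X * (if τ (π i) = i then 1 else 0)) + (if π i = i then 1 else 0) := by
    intro π i
    rw [Matrix.sub_apply, Matrix.smul_apply, Matrix.one_apply, Equiv.Perm.permMatrix,
      PEquiv.toMatrix_apply, Equiv.toPEquiv_apply, smul_eq_mul, sub_eq_neg_add, ← neg_mul]
    exact congrArg₂ (· + ·)
      (congrArg (fun t => -X * t) (if_congr Option.mem_some_iff rfl rfl)) rfl
  have hdet : (Matrix.det ((1 : Matrix S S ℚ[X]) - (X : ℚ[X]) • τ.permMatrix ℚ[X]))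
      = ∑ π : Perm S, ∑ U : Finset S,
          Polynomial.C (((Equiv.Perm.sign π : ℤ) : ℚ) * (-1 : ℚ) ^ U.card *
            (if ∀ i ∈ U, τ (π i) = i then 1 else 0) *
            (if ∀ i ∈ Finset.univ \ U, π i = i then 1 else 0)) * X ^ U.card := by
    rw [Matrix.det_apply]
    refine Finset.sum_congr rfl fun π _ => ?_
    rw [Finset.prod_congr rfl fun i _ => hentry π i, Finset.prod_add]
    rw [Finset.powerset_univ, Finset.smul_sum]
    refine Finset.sum_congr rfl fun U _ => ?_
    rw [Finset.prod_mul_distrib, Finset.prod_const, Finset.prod_boole, Finset.prod_boole]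
    have hsmul : ∀ p : ℚ[X], Equiv.Perm.sign π • p
        = Polynomial.C (((Equiv.Perm.sign π : ℤ) : ℚ)) * p := by
      intro p
      rw [Units.smul_def, zsmul_eq_mul]
      norm_cast
    rw [hsmul]
    have hXpow : (-X : ℚ[X]) ^ U.card = Polynomial.C ((-1 : ℚ) ^ U.card) * X ^ U.card := by
      rw [neg_pow, map_pow, Polynomial.C_neg, Polynomial.C_1]
    by_cases hP : ∀ i ∈ U, τ (π i) = i
    · by_cases hQ : ∀ i ∈ Finset.univ \ U, π i = i
      · rw [if_pos hP, if_pos hP, if_pos hQ, if_pos hQ, hXpow]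
        simp only [Polynomial.C_mul, mul_one, Polynomial.C_1]
        ring
      · rw [if_neg hQ, if_neg hQ]
        simp
    · rw [if_neg hP, if_neg hP]
      simp
  rw [hdet, Polynomial.finset_sum_coeff]
  have hco : ∀ π : Perm S, (∑ U : Finset S,
      Polynomial.C (((Equiv.Perm.sign π : ℤ) : ℚ) * (-1 : ℚ) ^ U.card *
            (if ∀ i ∈ U, τ (π i) = i then 1 else 0) *
            (if ∀ i ∈ Finset.univ \ U, π i = i then 1 else 0)) * X ^ U.card).coeff k
      = ∑ U : Finset S, (if U.card = k then
          ((Equiv.Perm.sign π : ℤ) : ℚ) * (-1 : ℚ) ^ k *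
            (if ∀ i ∈ U, τ (π i) = i then 1 else 0) *
            (if ∀ i ∈ Finset.univ \ U, π i = i then 1 else 0) else 0) := by
    intro π
    rw [Polynomial.finset_sum_coeff]
    refine Finset.sum_congr rfl fun U _ => ?_
    rw [Polynomial.coeff_C_mul, Polynomial.coeff_X_pow]
    by_cases hc : U.card = k
    · rw [if_pos hc, if_pos hc.symm, hc, mul_one]
    · rw [if_neg hc, if_neg (fun hk : k = U.card => hc hk.symm), mul_zero]
  rw [Finset.sum_congr rfl fun π _ => hco π, Finset.sum_comm]
  -- now sum over U, then π
  have hUsum : ∀ U : Finset S, ∑ π : Perm S, (if U.card = k then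
          ((Equiv.Perm.sign π : ℤ) : ℚ) * (-1 : ℚ) ^ k *
            (if ∀ i ∈ U, τ (π i) = i then 1 else 0) *
            (if ∀ i ∈ Finset.univ \ U, π i = i then 1 else 0) else 0)
      = if hc : U.card = k then
          (-1 : ℚ) ^ k * (if imgK k τ ⟨U, hc⟩ = ⟨U, hc⟩ then sgnQ k τ ⟨U, hc⟩ else 0) else 0 := by
    intro U
    by_cases hc : U.card = k
    · rw [dif_pos hc, ← innerSum k τ ⟨U, hc⟩, Finset.mul_sum]
      refine Finset.sum_congr rfl fun π _ => ?_
      rw [if_pos hc]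
      ring
    · rw [dif_neg hc]
      exact Finset.sum_eq_zero fun π _ => if_neg hc
  rw [Finset.sum_congr rfl fun U _ => hUsum U]
  rw [trace_N, Finset.mul_sum]
  -- convert sum over Finset S with card condition to sum over subtype
  rw [← Finset.sum_filter_add_sum_filter_not Finset.univ (fun U : Finset S => U.card = k)]
  have hzero : ∑ U ∈ Finset.univ.filter (fun U : Finset S => ¬ U.card = k),
      (if hc : U.card = k then
          (-1 : ℚ) ^ k * (if imgK k τ ⟨U, hc⟩ = ⟨U, hc⟩ then sgnQ k τ ⟨U, hc⟩ else 0) else 0) = 0 := by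
    refine Finset.sum_eq_zero fun U hU => ?_
    rw [dif_neg (Finset.mem_filter.mp hU).2]
  rw [hzero, add_zero]
  rw [Finset.sum_subtype (p := fun U : Finset S => U.card = k)
    (Finset.univ.filter (fun U : Finset S => U.card = k))
    (fun U => by simp) (fun U : Finset S => if hc : U.card = k then
          (-1 : ℚ) ^ k * (if imgK k τ ⟨U, hc⟩ = ⟨U, hc⟩ then sgnQ k τ ⟨U, hc⟩ else 0) else 0)]
  refine Finset.sum_congr rfl fun U _ => ?_
  rw [dif_pos U.2]
  congr 1
  exact if_congr eq_comm rfl rfl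


/-- The diagonal action of `Perm (Fin n)` on `Fin n × Fin r`. -/
def rho (n r : ℕ) (σ : Perm (Fin n)) : Perm (Fin n × Fin r) :=
  Equiv.prodCongr σ (Equiv.refl (Fin r))

lemma rho_mul (n r : ℕ) (σ τ : Perm (Fin n)) :
    rho n r (σ * τ) = rho n r σ * rho n r τ := by
  refine Equiv.ext fun x => ?_
  obtain ⟨a, b⟩ := x
  rfl

lemma det_pow_eq {n r : ℕ} (σ : Perm (Fin n)) :
    (Matrix.det ((1 : Matrix (Fin n) (Fin n) ℚ[X]) - (X : ℚ[X]) • σ.permMatrix ℚ[X])) ^ r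
      = Matrix.det ((1 : Matrix (Fin n × Fin r) (Fin n × Fin r) ℚ[X]) -
          (X : ℚ[X]) • (rho n r σ).permMatrix ℚ[X]) := by
  have hker : ((1 : Matrix (Fin n) (Fin n) ℚ[X]) - (X : ℚ[X]) • σ.permMatrix ℚ[X]) ⊗ₖ
        (1 : Matrix (Fin r) (Fin r) ℚ[X])
      = (1 : Matrix (Fin n × Fin r) (Fin n × Fin r) ℚ[X]) -
          (X : ℚ[X]) • (rho n r σ).permMatrix ℚ[X] := by
    refine Matrix.ext fun x y => ?_
    obtain ⟨a, b⟩ := x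
    obtain ⟨c, d⟩ := y
    simp only [Matrix.kroneckerMap_apply, Matrix.sub_apply, Matrix.smul_apply,
      Matrix.one_apply, Equiv.Perm.permMatrix, PEquiv.toMatrix_apply,
      Equiv.toPEquiv_apply, smul_eq_mul, Option.mem_some_iff, rho]
    by_cases hac : a = c <;> by_cases hbd : b = d <;> by_cases hsac : σ a = c <;>
      simp [hac, hbd, hsac, Prod.ext_iff, Option.mem_some_iff, Equiv.prodCongr_apply] <;> ring
  rw [← hker, Matrix.det_kronecker, Matrix.det_one, one_pow, mul_one, Fintype.card_fin]

/-- The trace of an idempotent rational matrix is a natural number. -/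
lemma trace_idem {m : Type*} [Fintype m] [DecidableEq m] (P : Matrix m m ℚ)
    (h : P * P = P) : ∃ c : ℕ, Matrix.trace P = c := by
  set f : (m → ℚ) →ₗ[ℚ] (m → ℚ) := Matrix.toLin' P with hf
  have hff : f.comp f = f := by rw [hf, ← Matrix.toLin'_mul, h]
  have hproj : LinearMap.IsProj (LinearMap.range f) f := by
    refine ⟨fun x => LinearMap.mem_range_self f x, ?_⟩
    rintro x ⟨y, rfl⟩
    have := congrArg (fun g => g y) hff
    simpa using this
  refine ⟨Module.finrank ℚ (LinearMap.range f), ?_⟩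
  have htr := hproj.trace
  have hmat : LinearMap.trace ℚ (m → ℚ) f = Matrix.trace P := by
    rw [LinearMap.trace_eq_matrix_trace ℚ (Pi.basisFun ℚ m) f,
      LinearMap.toMatrix_eq_toMatrix', hf, LinearMap.toMatrix'_toLin']
  rw [← hmat, htr]


end AvgDetAux

open AvgDetAux

/-- For `r, n ≥ 1`, `Q_n^r(x) := (1/n!) ∑_{σ ∈ S_n} det(I - x M_σ)^r` has integer
coefficients. -/
theorem average_det_pow_integer_coefficients (n r : ℕ) (hn : 1 ≤ n) (hr : 1 ≤ r) :
    ∀ k : ℕ, ∃ c : ℤ,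
      (((n.factorial : ℚ)⁻¹ : ℚ) •
          ∑ σ : Equiv.Perm (Fin n),
            (Matrix.det ((1 : Matrix (Fin n) (Fin n) ℚ[X]) -
              (X : ℚ[X]) • σ.permMatrix ℚ[X])) ^ r).coeff k = (c : ℚ) := by
  intro k
  letI : LinearOrder (Fin n × Fin r) := inferInstanceAs (LinearOrder (Lex (Fin n × Fin r)))
  -- the averaged "exterior power" matrix
  set T : Matrix (K (Fin n × Fin r) k) (K (Fin n × Fin r) k) ℚ :=
    ∑ σ : Equiv.Perm (Fin n), N k (rho n r σ) with hT
  have hcard : ((Fintype.card (Equiv.Perm (Fin n)) : ℚ)) = (n.factorial : ℚ) := by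
    rw [Fintype.card_perm, Fintype.card_fin]
  have hc0 : ((Fintype.card (Equiv.Perm (Fin n)) : ℚ)) ≠ 0 :=
    Nat.cast_ne_zero.mpr Fintype.card_ne_zero
  have hTT : T * T = ((Fintype.card (Equiv.Perm (Fin n)) : ℚ)) • T := by
    rw [hT, Finset.sum_mul]
    have hrow : ∀ σ : Equiv.Perm (Fin n),
        N k (rho n r σ) * (∑ τ : Equiv.Perm (Fin n), N k (rho n r τ))
          = ∑ υ : Equiv.Perm (Fin n), N k (rho n r υ) := by
      intro σ
      rw [Finset.mul_sum]
      have h1 : ∀ τ : Equiv.Perm (Fin n),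
          N k (rho n r σ) * N k (rho n r τ) = N k (rho n r (σ * τ)) := by
        intro τ
        rw [rho_mul, N_mul]
      rw [Finset.sum_congr rfl fun τ _ => h1 τ]
      exact Fintype.sum_bijective (fun τ => σ * τ) (Group.mulLeft_bijective σ) _ _
        (fun τ => rfl)
    rw [Finset.sum_congr rfl fun σ _ => hrow σ, Finset.sum_const, Finset.card_univ,
      Nat.cast_smul_eq_nsmul]
  set P : Matrix (K (Fin n × Fin r) k) (K (Fin n × Fin r) k) ℚ :=
    ((Fintype.card (Equiv.Perm (Fin n)) : ℚ))⁻¹ • T with hP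
  have hPP : P * P = P := by
    rw [hP, smul_mul_assoc, mul_smul_comm, hTT, smul_smul, smul_smul]
    congr 1
    field_simp
  obtain ⟨m0, hm0⟩ := trace_idem P hPP
  refine ⟨(-1) ^ k * m0, ?_⟩
  have hexp : ∀ σ : Equiv.Perm (Fin n),
      ((Matrix.det ((1 : Matrix (Fin n) (Fin n) ℚ[X]) -
          (X : ℚ[X]) • σ.permMatrix ℚ[X])) ^ r).coeff k
        = (-1 : ℚ) ^ k * Matrix.trace (N k (rho n r σ)) := by
    intro σ
    rw [det_pow_eq σ]
    exact coeff_det k (rho n r σ)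
  rw [Polynomial.coeff_smul, Polynomial.finset_sum_coeff,
    Finset.sum_congr rfl fun σ _ => hexp σ, ← Finset.mul_sum, ← Matrix.trace_sum, ← hT]
  have htrP : Matrix.trace P = ((Fintype.card (Equiv.Perm (Fin n)) : ℚ))⁻¹ * Matrix.trace T := by
    rw [hP, Matrix.trace_smul, smul_eq_mul]
  rw [smul_eq_mul, ← hcard]
  push_cast
  rw [← hm0, htrP]
  ring
end

section
/- For any even positive integer r and any n ≥ 1, the polynomial Q_n^r(x) := (1/n!) · ∑_{σ ∈ S_n} det(I_n - x·M_σ)^r is palindromic of degree nr: Q_n^r(x) = x^{nr} · Q_n^r(1/x). -/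
open Polynomial Matrix Equiv

section aux
variable {n : ℕ}

private noncomputable def Pp (n : ℕ) (σ : Perm (Fin n)) : ℚ[X] :=
  Matrix.det ((1 : Matrix (Fin n) (Fin n) ℚ[X]) - (X : ℚ[X]) • σ.permMatrix ℚ[X])

private lemma permMatrix_map_C (σ : Perm (Fin n)) :
    (σ.permMatrix ℚ).map (Polynomial.C) = σ.permMatrix ℚ[X] := by
  ext i j
  simp [PEquiv.toMatrix, Matrix.map_apply, apply_ite Polynomial.C]

private lemma permMatrix_mul_inv (σ : Perm (Fin n)) :
    (σ.permMatrix ℚ[X]) * (σ⁻¹.permMatrix ℚ[X]) = 1 := by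
  rw [Equiv.Perm.permMatrix, Equiv.Perm.permMatrix, ← PEquiv.toMatrix_trans,
    ← Equiv.toPEquiv_trans]
  simp [Equiv.self_trans_symm, Equiv.Perm.one_def, Equiv.Perm.inv_def]

private lemma charpoly_perm (σ : Perm (Fin n)) :
    (σ.permMatrix ℚ).charpoly =
      Polynomial.C (((-1 : ℚ) ^ n) * ((Equiv.Perm.sign σ : ℤ) : ℚ)) * Pp n σ⁻¹ := by
  have h1 : (σ.permMatrix ℚ).charpoly =
      Matrix.det (Matrix.scalar (Fin n) (X : ℚ[X]) - σ.permMatrix ℚ[X]) := by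
    rw [Matrix.charpoly, Matrix.charmatrix, RingHom.mapMatrix_apply, permMatrix_map_C]
  have hscal : Matrix.scalar (Fin n) (X : ℚ[X]) = (X : ℚ[X]) • (1 : Matrix (Fin n) (Fin n) ℚ[X]) := by
    rw [Matrix.scalar_apply, smul_eq_diagonal_mul]
    simp
  have h2 : Matrix.scalar (Fin n) (X : ℚ[X]) - σ.permMatrix ℚ[X] =
      (σ.permMatrix ℚ[X]) * ((X : ℚ[X]) • σ⁻¹.permMatrix ℚ[X] - 1) := by
    rw [Matrix.mul_sub, Matrix.mul_smul, permMatrix_mul_inv, mul_one, hscal]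
  rw [h1, h2, Matrix.det_mul, (neg_sub _ _).symm, Matrix.det_neg, Matrix.det_permutation]
  rw [Pp]
  rw [Fintype.card_fin]
  simp only [_root_.map_mul, map_pow, map_neg, _root_.map_one, map_intCast]
  ring

end aux

section aux2
variable {n : ℕ}

private lemma eps_sq (σ : Perm (Fin n)) :
    ((((-1:ℚ)^n) * ((Equiv.Perm.sign σ : ℤ):ℚ)))^2 = 1 := by
  rcases Int.units_eq_one_or (Equiv.Perm.sign σ) with h | h <;>
    simp [h, mul_pow, ← pow_mul, pow_mul']

private lemma Pp_eq (τ : Perm (Fin n)) :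
    Pp n τ = Polynomial.C (((-1 : ℚ) ^ n) * ((Equiv.Perm.sign τ : ℤ) : ℚ)) *
      (τ⁻¹.permMatrix ℚ).charpoly := by
  have h := charpoly_perm (n := n) τ⁻¹
  rw [inv_inv, Equiv.Perm.sign_inv] at h
  rw [h, ← mul_assoc, ← _root_.map_mul, ← sq, eps_sq, Polynomial.C_1, one_mul]

private lemma natDegree_Pp (τ : Perm (Fin n)) : (Pp n τ).natDegree = n := by
  rw [Pp_eq τ, natDegree_mul (Polynomial.C_ne_zero.mpr ?_) (Matrix.charpoly_monic _).ne_zero,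
    natDegree_C, Matrix.charpoly_natDegree_eq_dim, Fintype.card_fin, zero_add]
  rcases Int.units_eq_one_or (Equiv.Perm.sign τ) with h | h <;> simp [h]

private lemma leadingCoeff_Pp (τ : Perm (Fin n)) :
    (Pp n τ).leadingCoeff = ((-1 : ℚ) ^ n) * ((Equiv.Perm.sign τ : ℤ) : ℚ) := by
  rw [Pp_eq τ, leadingCoeff_mul, leadingCoeff_C, (Matrix.charpoly_monic _).leadingCoeff, mul_one]

private lemma my_reverse_pow (p : ℚ[X]) (k : ℕ) : (p ^ k).reverse = p.reverse ^ k := by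
  induction k with
  | zero => simp [Polynomial.reverse]
  | succ k ih => rw [pow_succ, Polynomial.reverse_mul_of_domain, ih, pow_succ]

private lemma reverse_Pp (τ : Perm (Fin n)) :
    (Pp n τ).reverse =
      Polynomial.C (((-1 : ℚ) ^ n) * ((Equiv.Perm.sign τ : ℤ) : ℚ)) * Pp n τ⁻¹ := by
  have h := Matrix.reverse_charpoly (τ⁻¹.permMatrix ℚ)
  have hrev : (τ⁻¹.permMatrix ℚ).charpolyRev = Pp n τ⁻¹ := by
    rw [Matrix.charpolyRev, permMatrix_map_C, Pp]
  rw [hrev] at h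
  rw [Pp_eq τ, Polynomial.reverse_mul_of_domain, Polynomial.reverse_C, h]

private lemma reverse_Pp_pow {r : ℕ} (hre : Even r) (τ : Perm (Fin n)) :
    (Pp n τ ^ r).reverse = Pp n τ⁻¹ ^ r := by
  obtain ⟨m, rfl⟩ := hre
  rw [my_reverse_pow, reverse_Pp, mul_pow, ← map_pow, ← two_mul, pow_mul, eps_sq,
    one_pow, Polynomial.C_1, one_mul]

end aux2

/-- For `r` even positive and `n ≥ 1`, `Q_n^r(x) := (1/n!) ∑_{σ ∈ S_n} det(I - x M_σ)^r`
is palindromic of degree `n·r`: its coefficient sequence is symmetric,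
equivalently `Q_n^r(x) = x^{nr} Q_n^r(1/x)`. -/
theorem average_det_pow_palindromic (n r : ℕ) (hn : 1 ≤ n) (hr : 1 ≤ r) (hre : Even r) :
    (((n.factorial : ℚ)⁻¹ : ℚ) •
          ∑ σ : Equiv.Perm (Fin n),
            (Matrix.det ((1 : Matrix (Fin n) (Fin n) ℚ[X]) -
              (X : ℚ[X]) • σ.permMatrix ℚ[X])) ^ r).natDegree = n * r ∧
      ∀ k ≤ n * r,
        (((n.factorial : ℚ)⁻¹ : ℚ) •
            ∑ σ : Equiv.Perm (Fin n),
              (Matrix.det ((1 : Matrix (Fin n) (Fin n) ℚ[X]) -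
                (X : ℚ[X]) • σ.permMatrix ℚ[X])) ^ r).coeff k =
          (((n.factorial : ℚ)⁻¹ : ℚ) •
              ∑ σ : Equiv.Perm (Fin n),
                (Matrix.det ((1 : Matrix (Fin n) (Fin n) ℚ[X]) -
                  (X : ℚ[X]) • σ.permMatrix ℚ[X])) ^ r).coeff (n * r - k) := by
  classical
  have hnd : ∀ σ : Perm (Fin n), (Pp n σ ^ r).natDegree = n * r := fun σ => by
    rw [Polynomial.natDegree_pow, natDegree_Pp, mul_comm]
  have hlead : ∀ σ : Perm (Fin n), (Pp n σ ^ r).coeff (n * r) = 1 := fun σ => by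
    rw [← hnd σ, Polynomial.coeff_natDegree, Polynomial.leadingCoeff_pow, leadingCoeff_Pp]
    obtain ⟨m, rfl⟩ := hre
    rw [← two_mul, pow_mul, eps_sq, one_pow]
  set S : ℚ[X] := ∑ σ : Perm (Fin n), Pp n σ ^ r with hSdef
  have hScoeff_top : S.coeff (n * r) = (n.factorial : ℚ) := by
    rw [hSdef, Polynomial.finset_sum_coeff]
    simp only [hlead]
    simp [Fintype.card_perm]
  have hfact : (n.factorial : ℚ) ≠ 0 := Nat.cast_ne_zero.mpr (Nat.factorial_ne_zero n)
  have hSne : S ≠ 0 := fun h => hfact (by rw [← hScoeff_top, h, Polynomial.coeff_zero])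
  have hSnd : S.natDegree = n * r := le_antisymm
    (Polynomial.natDegree_sum_le_of_forall_le _ _ fun σ _ => (hnd σ).le)
    (Polynomial.le_natDegree_of_ne_zero (by rw [hScoeff_top]; exact hfact))
  have hsymm : ∀ k, k ≤ n * r → S.coeff k = S.coeff (n * r - k) := by
    intro k hk
    calc S.coeff k = ∑ σ : Perm (Fin n), (Pp n σ⁻¹ ^ r).coeff k := by
          rw [hSdef, Polynomial.finset_sum_coeff]
          exact Fintype.sum_equiv (Equiv.inv (Perm (Fin n))) _ _ (fun σ => rfl)
      _ = ∑ σ : Perm (Fin n), ((Pp n σ ^ r).reverse).coeff k := by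
          simp_rw [reverse_Pp_pow hre]
      _ = ∑ σ : Perm (Fin n), (Pp n σ ^ r).coeff (n * r - k) := by
          refine Finset.sum_congr rfl fun σ _ => ?_
          rw [Polynomial.coeff_reverse, hnd σ, Polynomial.revAt_le hk]
      _ = S.coeff (n * r - k) := by rw [hSdef, Polynomial.finset_sum_coeff]
  have hA : (((n.factorial : ℚ)⁻¹ : ℚ) • S).natDegree = n * r := by
    rw [Polynomial.smul_eq_C_mul, Polynomial.natDegree_mul
      (Polynomial.C_ne_zero.mpr (inv_ne_zero hfact)) hSne, Polynomial.natDegree_C, zero_add, hSnd]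
  have hB : ∀ k, k ≤ n * r → (((n.factorial : ℚ)⁻¹ : ℚ) • S).coeff k =
      (((n.factorial : ℚ)⁻¹ : ℚ) • S).coeff (n * r - k) := by
    intro k hk
    rw [Polynomial.coeff_smul, Polynomial.coeff_smul, hsymm k hk]
  exact ⟨hA, hB⟩
end
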